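/- Let (Ω, F, P) be a probability space with a filtration (F_L)_{L∈ℕ}, let ε > 0, and let V_1, ..., V_n be random variables measurable with respect to F_∞ = ∨_L F_L, with ε ≤ V_i ≤ 1 almost surely for each i. Let r_1, ..., r_n > 0 be constants. For m ∈ ℕ set L(m) = ⌊√m⌋ and U_i^{(m)} = E[V_i | F_{L(m)}]; define m_i(m) = max{ L(m), ⌊ m·√(U_i^{(m)}) / ∑_{j=1}^n √(U_j^{(m)}) ⌋ } for i = 1, ..., n−1, and m_n(m) = m − ∑_{i=1}^{n−1} m_i(m). Then lim_{m→∞} m · E[ ∑_{i=1}^n V_i / (m_i(m) + r_i) ] = E[ (∑_{i=1}^n √V_i)² ]. -/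

import Mathlib

/-!
Write `ρ_i = √U_i / ∑_j √U_j` (`sqrtProportion`). Every coordinate of the allocation is within
`n (⌊√m⌋ + 1)` of `m ρ_i`: the first `n` coordinates `max(L, ⌊m ρ_i⌋)` are off by at most `L + 1`,
and the last one absorbs the sum of their errors. Hence `m_i(m)/m - ρ_i(m) → 0`, while
`ρ_i(m) → √V_i / ∑_j √V_j` almost surely by Lévy's upward theorem, so
`m ∑ V_i/(m_i + r_i) → ∑_i V_i ∑_j √V_j / √V_i = (∑_i √V_i)²` almost surely.
Since `V_i ≥ ε`, every `ρ_i ≥ √ε/(n+1)`, so eventually `m_i ≥ m √ε / (2(n+1))` for all `ω`;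
this bounds the integrands uniformly and dominated convergence concludes.
-/

open MeasureTheory ProbabilityTheory Filter Finset

noncomputable def sqrtProportion {ι : Type*} [Fintype ι] (u : ι → ℝ) (i : ι) : ℝ :=
  √(u i) / ∑ j, √(u j)

section SqrtProportion

variable {ι : Type*} [Fintype ι]

lemma sqrtProportion_nonneg (u : ι → ℝ) (i : ι) : 0 ≤ sqrtProportion u i := by
  unfold sqrtProportion
  positivity

lemma sum_sqrt_pos [Nonempty ι] {u : ι → ℝ} (hu : ∀ j, 0 < u j) : 0 < ∑ j, √(u j) :=
  Finset.sum_pos (fun j _ => Real.sqrt_pos.2 (hu j)) univ_nonempty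

lemma sqrtProportion_pos {u : ι → ℝ} (hu : ∀ j, 0 < u j) (i : ι) : 0 < sqrtProportion u i :=
  have : Nonempty ι := ⟨i⟩
  div_pos (Real.sqrt_pos.2 (hu i)) (sum_sqrt_pos hu)

lemma sum_sqrtProportion [Nonempty ι] {u : ι → ℝ} (hu : ∀ j, 0 < u j) :
    ∑ i, sqrtProportion u i = 1 := by
  simp only [sqrtProportion, ← Finset.sum_div, div_self (sum_sqrt_pos hu).ne']

lemma div_sqrtProportion (u : ι → ℝ) (i : ι) :
    u i / sqrtProportion u i = √(u i) * ∑ j, √(u j) := by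
  rw [sqrtProportion, div_div_eq_mul_div, mul_div_right_comm, Real.div_sqrt]

lemma sum_div_sqrtProportion (u : ι → ℝ) :
    ∑ i, u i / sqrtProportion u i = (∑ i, √(u i)) ^ 2 := by
  simp only [div_sqrtProportion, ← Finset.sum_mul, sq]

lemma div_card_le_sqrtProportion {ε : ℝ} (hε : 0 < ε) {u : ι → ℝ}
    (hu : ∀ j, u j ∈ Set.Icc ε 1) (i : ι) : √ε / Fintype.card ι ≤ sqrtProportion u i := by
  have : Nonempty ι := ⟨i⟩
  have hpos : 0 < ∑ j, √(u j) := sum_sqrt_pos fun j => hε.trans_le (hu j).1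
  have hle : ∑ j, √(u j) ≤ Fintype.card ι := by
    simpa using Finset.sum_le_sum fun j (_ : j ∈ univ) => Real.sqrt_le_one.2 (hu j).2
  exact div_le_div₀ (Real.sqrt_nonneg _) (Real.sqrt_le_sqrt (hu i).1) hpos hle

lemma Filter.Tendsto.sqrtProportion {α : Type*} {l : Filter α} {u : α → ι → ℝ} {v : ι → ℝ}
    (hu : ∀ j, Tendsto (fun x => u x j) l (nhds (v j))) (hv : ∀ j, 0 < v j) (i : ι) :
    Tendsto (fun x => sqrtProportion (u x) i) l (nhds (sqrtProportion v i)) :=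
  have : Nonempty ι := ⟨i⟩
  (hu i).sqrt.div (tendsto_finsetSum _ fun j _ => (hu j).sqrt) (sum_sqrt_pos hv).ne'

lemma Measurable.sqrtProportion {α : Type*} [MeasurableSpace α] {u : ι → α → ℝ}
    (hu : ∀ j, Measurable (u j)) (i : ι) : Measurable fun x => sqrtProportion (fun j => u j x) i :=
  (hu i).sqrt.div (Finset.measurable_sum _ fun j _ => (hu j).sqrt)

end SqrtProportion

lemma tendsto_nat_sqrt_atTop : Tendsto Nat.sqrt atTop atTop :=
  tendsto_atTop_atTop_of_monotone (fun _ _ h => Nat.sqrt_le_sqrt h)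
    fun b => ⟨b * b, (Nat.sqrt_eq b).ge⟩

lemma tendsto_nat_sqrt_add_one_div_atTop :
    Tendsto (fun m : ℕ => ((Nat.sqrt m : ℝ) + 1) / m) atTop (nhds 0) := by
  have hsqrt : Tendsto (fun m : ℕ => (√(m : ℝ))⁻¹) atTop (nhds 0) :=
    tendsto_inv_atTop_zero.comp (Real.tendsto_sqrt_atTop.comp tendsto_natCast_atTop_atTop)
  have hsum := hsqrt.add (tendsto_const_div_atTop_nhds_zero_nat (1 : ℝ))
  rw [add_zero] at hsum
  refine squeeze_zero (fun m => by positivity) (fun m => ?_) hsum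
  rw [add_div, inv_eq_one_div, ← Real.sqrt_div_self']
  gcongr
  exact Real.nat_sqrt_le_real_sqrt

lemma eventually_mul_nat_sqrt_add_one_lt {c : ℝ} (hc : 0 < c) (k : ℝ) :
    ∀ᶠ m : ℕ in atTop, k * ((Nat.sqrt m : ℝ) + 1) < m * c := by
  have h := (tendsto_nat_sqrt_add_one_div_atTop.const_mul k).eventually_lt_const
    (by simpa using hc)
  filter_upwards [h, eventually_gt_atTop 0] with m hm hm0
  rwa [← mul_div_assoc, div_lt_iff₀ (by positivity), mul_comm c] at hm

section Allocation

variable {n : ℕ}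

def IsAllocation (m L : ℕ) (ρ : Fin (n + 1) → ℝ) (a : Fin (n + 1) → ℤ) : Prop :=
  (∀ i : Fin n, a i.castSucc = max (L : ℤ) ⌊(m : ℝ) * ρ i.castSucc⌋) ∧
    a (Fin.last n) = m - ∑ i : Fin n, a i.castSucc

lemma sum_filter_val_lt_eq_sum_castSucc {M : Type*} [AddCommMonoid M] (f : Fin (n + 1) → M) :
    ∑ i ∈ univ.filter (fun i : Fin (n + 1) => (i : ℕ) < n), f i = ∑ i : Fin n, f i.castSucc := by
  simp [Finset.sum_filter, Fin.sum_univ_castSucc]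

lemma isAllocation_of_forall_val_lt {m L : ℕ} {ρ : Fin (n + 1) → ℝ} {a : Fin (n + 1) → ℤ}
    (ha : ∀ i : Fin (n + 1), (i : ℕ) < n → a i = max (L : ℤ) ⌊(m : ℝ) * ρ i⌋)
    (hlast : a (Fin.last n) = m - ∑ i ∈ univ.filter (fun i : Fin (n + 1) => (i : ℕ) < n), a i) :
    IsAllocation m L ρ a :=
  ⟨fun i => ha i.castSucc i.isLt, hlast.trans (by rw [sum_filter_val_lt_eq_sum_castSucc])⟩

namespace IsAllocation

variable {m L : ℕ} {ρ : Fin (n + 1) → ℝ} {a : Fin (n + 1) → ℤ}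

lemma abs_castSucc_sub_le (h : IsAllocation m L ρ a) (hρ : ∀ i, 0 ≤ ρ i) (i : Fin n) :
    |(a i.castSucc : ℝ) - m * ρ i.castSucc| ≤ L + 1 := by
  have hx : 0 ≤ (m : ℝ) * ρ i.castSucc := mul_nonneg m.cast_nonneg (hρ _)
  rw [h.1 i, abs_le]
  push_cast
  constructor
  · linarith [le_max_right (L : ℝ) ⌊(m : ℝ) * ρ i.castSucc⌋,
      Int.sub_one_lt_floor ((m : ℝ) * ρ i.castSucc), Nat.cast_nonneg (α := ℝ) L]
  · rw [sub_le_iff_le_add]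
    exact max_le (by linarith) (by linarith [Int.floor_le ((m : ℝ) * ρ i.castSucc)])

lemma abs_sub_le (h : IsAllocation m L ρ a) (hρ : ∀ i, 0 ≤ ρ i) (hρs : ∑ i, ρ i = 1)
    (i : Fin (n + 1)) : |(a i : ℝ) - m * ρ i| ≤ n * (L + 1) := by
  induction i using Fin.lastCases with
  | last =>
    have hlast : (a (Fin.last n) : ℝ) - m * ρ (Fin.last n) =
        -∑ j : Fin n, ((a j.castSucc : ℝ) - m * ρ j.castSucc) := by
      rw [Fin.sum_univ_castSucc] at hρs
      rw [h.2, Finset.sum_sub_distrib, ← Finset.mul_sum]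
      push_cast
      linear_combination (-(m : ℝ)) * hρs
    calc |(a (Fin.last n) : ℝ) - m * ρ (Fin.last n)|
        ≤ ∑ j : Fin n, |(a j.castSucc : ℝ) - m * ρ j.castSucc| := by
          rw [hlast, abs_neg]
          exact Finset.abs_sum_le_sum_abs _ _
      _ ≤ ∑ _j : Fin n, ((L : ℝ) + 1) := Finset.sum_le_sum fun j _ => h.abs_castSucc_sub_le hρ j
      _ = n * (L + 1) := by simp [mul_add]
  | cast j =>
    have hn : (1 : ℝ) ≤ n := by exact_mod_cast j.pos
    exact (h.abs_castSucc_sub_le hρ j).trans (le_mul_of_one_le_left (by positivity) hn)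

lemma norm_mul_sum_div_add_le (h : IsAllocation m L ρ a) {c : ℝ} (hρ : ∀ i, c ≤ ρ i)
    (hρs : ∑ i, ρ i = 1) (hm : 2 * n * (L + 1) < m * c) {v r : Fin (n + 1) → ℝ}
    (hv : ∀ i, v i ∈ Set.Icc 0 1) (hr : ∀ i, 0 ≤ r i) :
    ‖(m : ℝ) * ∑ i, v i / (a i + r i)‖ ≤ (n + 1) * (2 / c) := by
  have hmc : 0 < (m : ℝ) * c := by
    have : (0 : ℝ) ≤ n * (L + 1) := by positivity
    linarith
  have hc : 0 < c := pos_of_mul_pos_right hmc m.cast_nonneg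
  have hm0 : 0 < (m : ℝ) := pos_of_mul_pos_left hmc hc.le
  have hden : ∀ i, (m : ℝ) * c / 2 ≤ a i + r i := fun i => by
    have h1 := (abs_le.1 (h.abs_sub_le (fun j => hc.le.trans (hρ j)) hρs i)).1
    have h2 : (m : ℝ) * c ≤ m * ρ i := mul_le_mul_of_nonneg_left (hρ i) hm0.le
    linarith [hr i]
  have hterm : ∀ i, ‖(m : ℝ) * (v i / (a i + r i))‖ ≤ 2 / c := fun i => by
    have hpos : 0 < (a i : ℝ) + r i := by linarith [hden i]
    rw [Real.norm_of_nonneg (by have := (hv i).1; positivity), ← mul_div_assoc]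
    calc (m : ℝ) * v i / (a i + r i) ≤ m * 1 / (m * c / 2) :=
          div_le_div₀ (by positivity) (mul_le_mul_of_nonneg_left (hv i).2 hm0.le) (by positivity)
            (hden i)
      _ = 2 / c := by field_simp
  rw [Finset.mul_sum]
  calc ‖∑ i, (m : ℝ) * (v i / (a i + r i))‖ ≤ ∑ i, ‖(m : ℝ) * (v i / (a i + r i))‖ :=
        norm_sum_le _ _
    _ ≤ ∑ _i : Fin (n + 1), 2 / c := Finset.sum_le_sum fun i _ => hterm i
    _ = (n + 1) * (2 / c) := by simp

end IsAllocation

lemma tendsto_alloc_div {ρ : ℕ → Fin (n + 1) → ℝ} {R : Fin (n + 1) → ℝ}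
    {a : ℕ → Fin (n + 1) → ℤ} (ha : ∀ m, IsAllocation m (Nat.sqrt m) (ρ m) (a m))
    (hρ : ∀ m i, 0 ≤ ρ m i) (hρs : ∀ m, ∑ i, ρ m i = 1)
    (hlim : ∀ i, Tendsto (fun m => ρ m i) atTop (nhds (R i))) (i : Fin (n + 1)) :
    Tendsto (fun m : ℕ => (a m i : ℝ) / m) atTop (nhds (R i)) := by
  have herr : Tendsto (fun m : ℕ => (a m i : ℝ) / m - ρ m i) atTop (nhds 0) := by
    refine squeeze_zero_norm' ?_
      (by simpa using tendsto_nat_sqrt_add_one_div_atTop.const_mul (n : ℝ))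
    filter_upwards [eventually_ne_atTop 0] with m hm
    have hm' : (m : ℝ) ≠ 0 := by exact_mod_cast hm
    rw [show (a m i : ℝ) / m - ρ m i = ((a m i : ℝ) - m * ρ m i) / m by field_simp, norm_div,
      Real.norm_natCast, Real.norm_eq_abs, ← mul_div_assoc]
    gcongr
    exact (ha m).abs_sub_le (hρ m) (hρs m) i
  simpa using herr.add (hlim i)

lemma tendsto_mul_sum_div_alloc_add {u : ℕ → Fin (n + 1) → ℝ} {v : Fin (n + 1) → ℝ}
    {a : ℕ → Fin (n + 1) → ℤ} (ha : ∀ m, IsAllocation m (Nat.sqrt m) (sqrtProportion (u m)) (a m))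
    (hu : ∀ m i, 0 < u m i) (hv : ∀ i, 0 < v i)
    (hlim : ∀ i, Tendsto (fun m => u m i) atTop (nhds (v i))) (r : Fin (n + 1) → ℝ) :
    Tendsto (fun m : ℕ => (m : ℝ) * ∑ i, v i / ((a m i : ℝ) + r i)) atTop
      (nhds ((∑ i, √(v i)) ^ 2)) := by
  have halloc := tendsto_alloc_div ha (fun m => sqrtProportion_nonneg _)
    (fun m => sum_sqrtProportion (hu m)) fun i => Tendsto.sqrtProportion hlim hv i
  have hden : ∀ i, Tendsto (fun m : ℕ => (a m i : ℝ) / m + r i / m) atTop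
      (nhds (sqrtProportion v i)) := fun i => by
    simpa using (halloc i).add (tendsto_const_div_atTop_nhds_zero_nat (r i))
  have hsum : Tendsto (fun m : ℕ => ∑ i, v i / ((a m i : ℝ) / m + r i / m)) atTop
      (nhds (∑ i, v i / sqrtProportion v i)) :=
    tendsto_finsetSum _ fun i _ => tendsto_const_nhds.div (hden i) (sqrtProportion_pos hv i).ne'
  rw [← sum_div_sqrtProportion]
  refine hsum.congr fun m => ?_
  rw [Finset.mul_sum]
  refine Finset.sum_congr rfl fun i _ => ?_
  rw [← add_div, div_div_eq_mul_div, mul_comm, mul_div_assoc]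

lemma measurable_of_isAllocation {Ω : Type*} [MeasurableSpace Ω] {m L : ℕ}
    {ρ : Ω → Fin (n + 1) → ℝ} {a : Ω → Fin (n + 1) → ℤ} (ha : ∀ ω, IsAllocation m L (ρ ω) (a ω))
    (hρ : ∀ i, Measurable fun ω => ρ ω i) (i : Fin (n + 1)) : Measurable fun ω => a ω i := by
  have hcast : ∀ j : Fin n, Measurable fun ω => a ω j.castSucc := fun j => by
    rw [funext fun ω => (ha ω).1 j]
    exact measurable_const.max (measurable_const.mul (hρ _)).floor
  induction i using Fin.lastCases with
  | last =>
    rw [funext fun ω => (ha ω).2]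
    exact measurable_const.sub (Finset.measurable_sum _ fun j _ => hcast j)
  | cast j => exact hcast j

end Allocation

lemma ae_condExp_mem_Icc {Ω : Type*} {m m₀ : MeasurableSpace Ω} {μ : Measure Ω}
    [IsFiniteMeasure μ] (hm : m ≤ m₀) {f : Ω → ℝ} (hf : Integrable f μ) {a b : ℝ}
    (hab : ∀ᵐ ω ∂μ, f ω ∈ Set.Icc a b) : ∀ᵐ ω ∂μ, (μ[f | m]) ω ∈ Set.Icc a b := by
  have hlow := condExp_mono (m := m) (integrable_const a) hf (hab.mono fun _ h => h.1)
  have hup := condExp_mono (m := m) hf (integrable_const b) (hab.mono fun _ h => h.2)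
  rw [condExp_const hm] at hlow hup
  filter_upwards [hlow, hup] with ω h1 h2 using ⟨h1, h2⟩

/-- First-order optimality for the parallel system: along the two-stage allocation,
`m · E[∑ V i / (m i (m) + r i)] → E[(∑ √(V i))²]`. -/
theorem two_stage_first_order_optimality {Ω : Type*} {mΩ : MeasurableSpace Ω} (P : Measure Ω)
    [IsProbabilityMeasure P] (F : ℕ → MeasurableSpace Ω)
    (hFmono : Monotone F) (hFle : ∀ L, F L ≤ mΩ)
    (ε : ℝ) (hε : 0 < ε)
    (n : ℕ) (V : Fin (n + 1) → Ω → ℝ)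
    (hVmeas : ∀ i, Measurable[⨆ L, F L] (V i))
    (hV : ∀ i, ∀ᵐ ω ∂P, V i ω ∈ Set.Icc ε 1)
    (r : Fin (n + 1) → ℝ) (hr : ∀ i, 0 < r i)
    (alloc : ℕ → Fin (n + 1) → Ω → ℤ)
    (hAlloc : ∀ m (ω : Ω) (i : Fin (n + 1)), (i : ℕ) < n →
      alloc m i ω = max (Nat.sqrt m : ℤ)
        ⌊(m : ℝ) * Real.sqrt ((P[V i | F (Nat.sqrt m)]) ω) /
          ∑ j, Real.sqrt ((P[V j | F (Nat.sqrt m)]) ω)⌋)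
    (hAllocLast : ∀ m (ω : Ω),
      alloc m (Fin.last n) ω =
        (m : ℤ) - ∑ i ∈ Finset.univ.filter (fun i : Fin (n + 1) => (i : ℕ) < n),
          alloc m i ω) :
    Tendsto (fun m : ℕ => (m : ℝ) * ∫ ω, ∑ i, V i ω / ((alloc m i ω : ℝ) + r i) ∂P)
      atTop (nhds (∫ ω, (∑ i, Real.sqrt (V i ω)) ^ 2 ∂P)) := by
  have hVm : ∀ i, Measurable (V i) := fun i => (hVmeas i).mono (iSup_le hFle) le_rfl
  have hVint : ∀ i, Integrable (V i) P := fun i => .of_mem_Icc ε 1 (hVm i).aemeasurable (hV i)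
  have hU : ∀ᵐ ω ∂P, ∀ L i, (P[V i | F L]) ω ∈ Set.Icc ε 1 :=
    ae_all_iff.2 fun L => ae_all_iff.2 fun i => ae_condExp_mem_Icc (hFle L) (hVint i) (hV i)
  have hLevy : ∀ᵐ ω ∂P, ∀ i, Tendsto (fun L => (P[V i | F L]) ω) atTop (nhds (V i ω)) :=
    ae_all_iff.2 fun i => (hVint i).tendsto_ae_condExp (ℱ := ⟨F, hFmono, hFle⟩)
      (hVmeas i).stronglyMeasurable
  have hIsAlloc : ∀ m ω, IsAllocation m (Nat.sqrt m)
      (sqrtProportion fun j => (P[V j | F (Nat.sqrt m)]) ω) (alloc m · ω) := fun m ω =>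
    isAllocation_of_forall_val_lt (fun i hi => by rw [hAlloc m ω i hi, mul_div_assoc]; rfl)
      (hAllocLast m ω)
  have hmeas : ∀ m : ℕ, AEStronglyMeasurable
      (fun ω => (m : ℝ) * ∑ i, V i ω / ((alloc m i ω : ℝ) + r i)) P := fun m => by
    have ha := measurable_of_isAllocation (hIsAlloc m) <| Measurable.sqrtProportion fun j =>
      (stronglyMeasurable_condExp.mono (hFle _)).measurable
    exact (measurable_const.mul (Finset.measurable_sum _ fun i _ =>
      (hVm i).div ((measurable_from_top.comp (ha i)).add_const _))).aestronglyMeasurable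
  set c := √ε / (n + 1)
  simp_rw [← integral_const_mul]
  refine tendsto_integral_filter_of_dominated_convergence (fun _ => (n + 1) * (2 / c))
    (.of_forall hmeas) ?_ (integrable_const _) ?_
  · filter_upwards [eventually_mul_nat_sqrt_add_one_lt (by positivity : 0 < c) (2 * n)] with m hm
    filter_upwards [hU, ae_all_iff.2 hV] with ω hUω hVω
    refine (hIsAlloc m ω).norm_mul_sum_div_add_le (fun i => ?_)
      (sum_sqrtProportion fun j => hε.trans_le (hUω _ j).1) hm
      (fun i => ⟨hε.le.trans (hVω i).1, (hVω i).2⟩) fun i => (hr i).le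
    simpa using div_card_le_sqrtProportion hε (hUω _) i
  · filter_upwards [hU, hLevy, ae_all_iff.2 hV] with ω hUω hLevyω hVω
    exact tendsto_mul_sum_div_alloc_add (hIsAlloc · ω) (fun m i => hε.trans_le (hUω _ i).1)
      (fun i => hε.trans_le (hVω i).1) (fun i => (hLevyω i).comp tendsto_nat_sqrt_atTop) r
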